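/- arXiv:2410.18953 — 3 statements merged into one kernel-verified Lean document; each statement's English description precedes it below -/
import Mathlib

section
/- Let n and k be natural numbers with k ≤ n. If A is drawn uniformly at random from all n×k matrices over 𝔽₂ = ZMod 2, then the probability that A has full column rank (i.e., that x ↦ A·x is injective) is at least 1 − k·2^{k−n−1}. Equivalently, the number of full-column-rank n×k matrices over 𝔽₂ is at least (1 − k·2^{k−n−1})·2^{nk}, as an inequality of real numbers. -/
open Matrix Finset

lemma aux_ker_card {k : ℕ} (x : Fin k → ZMod 2) (hx : x ≠ 0) :
    Nat.card {r : Fin k → ZMod 2 // r ⬝ᵥ x = 0} * 2 = 2 ^ k := by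
  let φ : (Fin k → ZMod 2) →ₗ[ZMod 2] ZMod 2 :=
    { toFun := fun r => r ⬝ᵥ x
      map_add' := fun a b => add_dotProduct a b x
      map_smul' := fun c a => smul_dotProduct c a x }
  have hone : ∀ a : ZMod 2, a ≠ 0 → a = 1 := by decide
  have hsurj : Function.Surjective φ := by
    intro c
    obtain ⟨j, hj⟩ := Function.ne_iff.mp hx
    refine ⟨Pi.single j c, ?_⟩
    show Pi.single j c ⬝ᵥ x = c
    rw [single_dotProduct, hone (x j) hj, mul_one]
  have h1 : Nat.card (Fin k → ZMod 2) =
      Nat.card (LinearMap.ker φ) * Nat.card ((Fin k → ZMod 2) ⧸ LinearMap.ker φ) :=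
    Submodule.card_eq_card_quotient_mul_card _
  have h2 : Nat.card ((Fin k → ZMod 2) ⧸ LinearMap.ker φ) = 2 := by
    rw [Nat.card_congr (φ.quotKerEquivOfSurjective hsurj).toEquiv]
    simp [Nat.card_eq_fintype_card]
  have h3 : Nat.card {r : Fin k → ZMod 2 // r ⬝ᵥ x = 0} = Nat.card (LinearMap.ker φ) := by
    exact Nat.card_congr (Equiv.subtypeEquivRight fun r => Iff.rfl)
  have h4 : Nat.card (Fin k → ZMod 2) = 2 ^ k := by
    simp [Nat.card_eq_fintype_card]
  rw [h4, h2] at h1; omega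

lemma aux_mat_card {n k : ℕ} (x : Fin k → ZMod 2) (hx : x ≠ 0) :
    Nat.card {A : Matrix (Fin n) (Fin k) (ZMod 2) // A.mulVec x = 0} * 2 ^ n = 2 ^ (n * k) := by
  have e1 : {A : Matrix (Fin n) (Fin k) (ZMod 2) // A.mulVec x = 0} ≃
      (Fin n → {r : Fin k → ZMod 2 // r ⬝ᵥ x = 0}) := by
    refine (Equiv.subtypeEquivRight ?_).trans (Equiv.subtypePiEquivPi)
    intro A
    constructor
    · intro h i; exact congrFun h i
    · intro h; funext i; exact h i
  rw [Nat.card_congr e1, Nat.card_pi]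
  simp only [Finset.prod_const, Finset.card_univ, Fintype.card_fin]
  rw [← mul_pow, aux_ker_card x hx, ← pow_mul, mul_comm k n]

lemma aux_pow : ∀ k : ℕ, 2 ^ k ≤ k * 2 ^ (k - 1) + 1
  | 0 => by norm_num
  | 1 => by norm_num
  | (k + 2) => by
      have ih := aux_pow (k + 1)
      simp only [Nat.add_sub_cancel] at ih
      have h1 : (1 : ℕ) ≤ 2 ^ (k + 1) := Nat.one_le_two_pow
      show 2 ^ (k + 2) ≤ (k + 2) * 2 ^ (k + 1) + 1
      calc 2 ^ (k + 2) = 2 * 2 ^ (k + 1) := by ring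
        _ ≤ 2 * ((k + 1) * 2 ^ k + 1) := by omega
        _ = (k + 1) * 2 ^ (k + 1) + 2 := by ring
        _ ≤ (k + 2) * 2 ^ (k + 1) + 1 := by nlinarith

lemma aux_count (n k : ℕ) :
    2 ^ (n * k) ≤ Nat.card {A : Matrix (Fin n) (Fin k) (ZMod 2) // Function.Injective A.mulVec}
      + (2 ^ k - 1) * 2 ^ ((k - 1) * n) := by
  classical
  have hcard : Nat.card {A : Matrix (Fin n) (Fin k) (ZMod 2) // Function.Injective A.mulVec}
      = (Finset.univ.filter (fun A : Matrix (Fin n) (Fin k) (ZMod 2) =>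
          Function.Injective A.mulVec)).card := by
    rw [Nat.card_eq_fintype_card, Fintype.card_subtype]
  set B : Finset (Matrix (Fin n) (Fin k) (ZMod 2)) :=
    Finset.univ.filter (fun A => ¬ Function.Injective A.mulVec) with hB
  have hsplit : (Finset.univ.filter (fun A : Matrix (Fin n) (Fin k) (ZMod 2) =>
      Function.Injective A.mulVec)).card + B.card = 2 ^ (n * k) := by
    rw [hB, Finset.card_filter_add_card_filter_not, Finset.card_univ]
    show Fintype.card (Fin n → Fin k → ZMod 2) = 2 ^ (n * k)
    simp [Fintype.card_fun, ← pow_mul, Nat.mul_comm]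
  have hBsub : B ⊆ (Finset.univ.filter (fun x : Fin k → ZMod 2 => x ≠ 0)).biUnion
      (fun x => Finset.univ.filter (fun A : Matrix (Fin n) (Fin k) (ZMod 2) => A.mulVec x = 0)) := by
    intro A hA
    simp only [hB, Finset.mem_filter, Finset.mem_univ, true_and] at hA
    obtain ⟨a, b, hab, hne⟩ := Function.not_injective_iff.mp hA
    rw [Finset.mem_biUnion]
    refine ⟨a - b, ?_, ?_⟩
    · simp [sub_ne_zero.mpr hne]
    · simp [Matrix.mulVec_sub, sub_eq_zero.mpr hab]
  have hBcard : B.card ≤ (2 ^ k - 1) * 2 ^ ((k - 1) * n) := by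
    calc B.card ≤ ∑ x ∈ Finset.univ.filter (fun x : Fin k → ZMod 2 => x ≠ 0),
        (Finset.univ.filter (fun A : Matrix (Fin n) (Fin k) (ZMod 2) => A.mulVec x = 0)).card :=
      (Finset.card_le_card hBsub).trans (Finset.card_biUnion_le)
    _ ≤ ∑ x ∈ Finset.univ.filter (fun x : Fin k → ZMod 2 => x ≠ 0), 2 ^ ((k - 1) * n) := by
        refine Finset.sum_le_sum fun x hx => ?_
        simp only [Finset.mem_filter, Finset.mem_univ, true_and] at hx
        have h2 := aux_mat_card (n := n) x hx
        have hk1 : 1 ≤ k := by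
          rcases Nat.eq_zero_or_pos k with h | h
          · exfalso; apply hx; subst h; funext i; exact absurd i.2 (by omega)
          · exact h
        have hc : (Finset.univ.filter (fun A : Matrix (Fin n) (Fin k) (ZMod 2) =>
            A.mulVec x = 0)).card = Nat.card {A : Matrix (Fin n) (Fin k) (ZMod 2) // A.mulVec x = 0} := by
          rw [Nat.card_eq_fintype_card, Fintype.card_subtype]
        rw [hc]
        have hexp : n * k = (k - 1) * n + n := by
          cases k with
          | zero => omega
          | succ m => simp only [Nat.succ_sub_one]; ring
        rw [hexp, pow_add] at h2
        exact Nat.le_of_mul_le_mul_right (le_of_eq h2) (by positivity)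
    _ = (2 ^ k - 1) * 2 ^ ((k - 1) * n) := by
        rw [Finset.sum_const, smul_eq_mul]
        congr 1
        have : (Finset.univ.filter (fun x : Fin k → ZMod 2 => x ≠ 0)) = Finset.univ.erase 0 := by
          ext x; simp [Finset.mem_erase, and_comm]
        rw [this, Finset.card_erase_of_mem (Finset.mem_univ 0), Finset.card_univ]
        simp
  omega

/-- A uniformly random `n × k` matrix over `𝔽₂` has full column rank with
probability at least `1 - k·2^{k-n-1}`: the number of full-column-rank matrices
is at least `(1 - k·2^{k-n-1})·2^{nk}`, as real numbers. -/
theorem stmt_1 (n k : ℕ) (hk : k ≤ n) :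
    (1 - (k : ℝ) * (2 : ℝ) ^ ((k : ℤ) - (n : ℤ) - 1)) * 2 ^ (n * k) ≤
      (Nat.card {A : Matrix (Fin n) (Fin k) (ZMod 2) // Function.Injective A.mulVec} : ℝ) := by
  rcases Nat.eq_zero_or_pos k with hk0 | hk1
  · subst hk0
    simp only [Nat.cast_zero, zero_mul, sub_zero, one_mul, Nat.mul_zero, pow_zero]
    have : Nonempty {A : Matrix (Fin n) (Fin 0) (ZMod 2) // Function.Injective A.mulVec} :=
      ⟨⟨0, Function.injective_of_subsingleton _⟩⟩
    exact_mod_cast Nat.card_pos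
  · have hcount := aux_count n k
    have key : (((2 ^ k - 1) * 2 ^ ((k - 1) * n) : ℕ) : ℝ) ≤
        (k : ℝ) * (2 : ℝ) ^ ((k : ℤ) - (n : ℤ) - 1) * 2 ^ (n * k) := by
      have h1 : ((2 ^ k - 1) * 2 ^ ((k - 1) * n) : ℕ) ≤ (k * 2 ^ (k - 1)) * 2 ^ ((k - 1) * n) :=
        Nat.mul_le_mul_right _ (by have := aux_pow k; omega)
      calc (((2 ^ k - 1) * 2 ^ ((k - 1) * n) : ℕ) : ℝ)
          ≤ (((k * 2 ^ (k - 1)) * 2 ^ ((k - 1) * n) : ℕ) : ℝ) := by exact_mod_cast h1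
        _ = (k : ℝ) * ((2 : ℝ) ^ (((k - 1 : ℕ) : ℤ)) * (2 : ℝ) ^ ((((k - 1) * n : ℕ)) : ℤ)) := by
            rw [zpow_natCast, zpow_natCast]; push_cast; ring
        _ = (k : ℝ) * ((2 : ℝ) ^ ((k : ℤ) - (n : ℤ) - 1) * (2 : ℝ) ^ (((n * k : ℕ)) : ℤ)) := by
            rw [← zpow_add₀ (two_ne_zero), ← zpow_add₀ (two_ne_zero)]
            congr 1
            push_cast [hk1]
            ring_nf
        _ = (k : ℝ) * (2 : ℝ) ^ ((k : ℤ) - (n : ℤ) - 1) * 2 ^ (n * k) := by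
            rw [zpow_natCast]; ring
    have hcR : (2 : ℝ) ^ (n * k) ≤
        (Nat.card {A : Matrix (Fin n) (Fin k) (ZMod 2) // Function.Injective A.mulVec} : ℝ)
          + (((2 ^ k - 1) * 2 ^ ((k - 1) * n) : ℕ) : ℝ) := by
      exact_mod_cast hcount
    nlinarith [key, hcR]
end

section
/- Let m, n, k be natural numbers with k ≤ n. If A₁, …, A_m are drawn independently and uniformly at random from the n×k matrices over 𝔽₂ = ZMod 2, then the probability that every Aᵢ has full column rank is at least 1 − m·k·2^{k−n−1}. Equivalently, writing N for the number of full-column-rank n×k matrices over 𝔽₂, one has N^m ≥ (1 − m·k·2^{k−n−1})·2^{mnk} as real numbers. -/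
/-! A matrix `A` over `𝔽_q` is non-injective iff it kills some `x ≠ 0`. For fixed `x ≠ 0`,
`A ↦ A *ᵥ x` is a surjective additive map onto `𝔽_q^n`, so exactly a `q^{-n}` fraction of the
`n × k` matrices kill `x`. A union bound over the `q^k - 1` nonzero `x` bounds the fraction of
non-injective matrices by `(q^k - 1)/q^n`, which for `q = 2` is at most `k·2^{k-n-1}` by
Bernoulli's inequality `2^{-k} ≥ 1 - k/2`. Bernoulli again, `(1 - ε)^m ≥ 1 - mε`, passes to
`m` independent matrices. -/

open Matrix Function Finset

section

variable {F m n : Type*} [Field F] [Fintype n] [DecidableEq n]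

lemma surjective_mulVec_addMonoidHomLeft {x : n → F} (hx : x ≠ 0) :
    Surjective (mulVec.addMonoidHomLeft (m := m) x) := by
  obtain ⟨j, hj⟩ : ∃ j, x j ≠ 0 := Function.ne_iff.mp hx
  intro v
  refine ⟨vecMulVec v (Pi.single j (x j)⁻¹), ?_⟩
  change vecMulVec v _ *ᵥ x = v
  rw [vecMulVec_mulVec, single_dotProduct, inv_mul_cancel₀ hj, MulOpposite.op_one, one_smul]

variable [Fintype F] [Fintype m]

lemma card_mulVec_eq_zero_mul {x : n → F} (hx : x ≠ 0) :
    Nat.card {A : Matrix m n F // A *ᵥ x = 0} * Fintype.card F ^ Fintype.card m =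
      Fintype.card F ^ (Fintype.card m * Fintype.card n) := by
  have h := (mulVec.addMonoidHomLeft (m := m) x).ker.card_mul_index
  rw [AddSubgroup.index_ker, AddMonoidHom.range_eq_top_of_surjective _
    (surjective_mulVec_addMonoidHomLeft hx), AddSubgroup.card_top] at h
  simp only [Matrix, Nat.card_fun, Nat.card_eq_fintype_card, Fintype.card_fun] at h
  rwa [mul_comm (Fintype.card m), pow_mul]

lemma card_not_injective_mulVec_mul_le :
    Nat.card {A : Matrix m n F // ¬ Injective A.mulVec} * Fintype.card F ^ Fintype.card m ≤
      (Fintype.card F ^ Fintype.card n - 1) *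
        Fintype.card F ^ (Fintype.card m * Fintype.card n) := by
  classical
  have hsub : ({A | ¬ Injective A.mulVec} : Finset (Matrix m n F)) ⊆
      ({x | x ≠ 0} : Finset (n → F)).biUnion fun x => {A | A *ᵥ x = 0} := by
    intro A hA
    simp only [mem_filter, mem_univ, true_and, mem_biUnion] at hA ⊢
    rw [← coe_mulVecLin, injective_iff_map_eq_zero] at hA
    push Not at hA
    obtain ⟨x, hAx, hx⟩ := hA
    exact ⟨x, hx, hAx⟩
  calc Nat.card {A : Matrix m n F // ¬ Injective A.mulVec} * Fintype.card F ^ Fintype.card m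
      = #{A : Matrix m n F | ¬ Injective A.mulVec} * Fintype.card F ^ Fintype.card m := by
        rw [Nat.card_eq_fintype_card, Fintype.card_subtype]
    _ ≤ (∑ x ∈ ({x | x ≠ 0} : Finset (n → F)), #{A : Matrix m n F | A *ᵥ x = 0}) *
          Fintype.card F ^ Fintype.card m :=
        Nat.mul_le_mul_right _ ((card_le_card hsub).trans card_biUnion_le)
    _ = ∑ x ∈ ({x | x ≠ 0} : Finset (n → F)),
          Fintype.card F ^ (Fintype.card m * Fintype.card n) := by
        rw [sum_mul]
        refine sum_congr rfl fun x hx => ?_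
        rw [← card_mulVec_eq_zero_mul (mem_filter.mp hx).2, Nat.card_eq_fintype_card,
          Fintype.card_subtype]
    _ = _ := by
        rw [sum_const, smul_eq_mul, filter_ne', card_erase_of_mem (mem_univ _), card_univ,
          Fintype.card_fun]

lemma one_sub_div_mul_le_card_injective_mulVec :
    (1 - ((Fintype.card F : ℝ) ^ Fintype.card n - 1) / (Fintype.card F : ℝ) ^ Fintype.card m) *
        (Fintype.card F : ℝ) ^ (Fintype.card m * Fintype.card n) ≤
      Nat.card {A : Matrix m n F // Injective A.mulVec} := by
  classical
  set q : ℝ := (Fintype.card F : ℝ)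
  have hsplit : Nat.card {A : Matrix m n F // Injective A.mulVec} +
      Nat.card {A : Matrix m n F // ¬ Injective A.mulVec} =
        Fintype.card F ^ (Fintype.card m * Fintype.card n) := by
    rw [← Nat.card_sum, Nat.card_congr (Equiv.sumCompl _)]
    simp only [Matrix, Nat.card_eq_fintype_card, Fintype.card_fun]
    rw [← pow_mul, mul_comm]
  have hbad : (Nat.card {A : Matrix m n F // ¬ Injective A.mulVec} : ℝ) * q ^ Fintype.card m ≤
      (q ^ Fintype.card n - 1) * q ^ (Fintype.card m * Fintype.card n) := by
    have h := card_not_injective_mulVec_mul_le (F := F) (m := m) (n := n)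
    rw [← Nat.cast_le (α := ℝ)] at h
    push_cast [Nat.one_le_pow _ _ Fintype.card_pos] at h
    exact h
  have hq : 0 < q ^ Fintype.card m := by positivity
  rw [← Nat.cast_inj (R := ℝ)] at hsplit
  push_cast at hsplit
  rw [sub_mul, one_mul, div_mul_eq_mul_div]
  linarith [(le_div_iff₀ hq).mpr hbad]

end

lemma one_sub_mul_mul_pow_le_pow {R : Type*} [CommRing R] [LinearOrder R] [IsStrictOrderedRing R]
    {ε a b : R} (ha : 0 ≤ a) (hb : 0 ≤ b) (h : (1 - ε) * a ≤ b) (m : ℕ) :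
    (1 - m * ε) * a ^ m ≤ b ^ m := by
  rcases m.eq_zero_or_pos with rfl | hm
  · simp
  rcases le_or_gt ε 1 with hε1 | hε1
  · calc (1 - m * ε) * a ^ m ≤ (1 - ε) ^ m * a ^ m := by
          gcongr
          simpa [sub_eq_add_neg] using one_add_mul_le_pow (a := -ε) (by linarith) m
      _ = ((1 - ε) * a) ^ m := (mul_pow _ _ _).symm
      _ ≤ b ^ m := pow_le_pow_left₀ (mul_nonneg (by linarith) ha) h m
  · have hm1 : (1 : R) ≤ m := by exact_mod_cast hm
    have hneg : 1 - m * ε ≤ 0 := by nlinarith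
    exact (mul_nonpos_of_nonpos_of_nonneg hneg (pow_nonneg ha m)).trans (pow_nonneg hb m)

lemma two_pow_sub_one_div_two_pow_le (n k : ℕ) :
    ((2 : ℝ) ^ k - 1) / 2 ^ n ≤ k * 2 ^ ((k : ℤ) - n - 1) := by
  have hbern : 1 + k * ((1 : ℝ) / 2 - 1) ≤ (1 / 2) ^ k :=
    one_add_mul_sub_le_pow (by norm_num) k
  have hk : (2 : ℝ) ^ k - 1 ≤ k * 2 ^ k / 2 := by
    have h2k : (0 : ℝ) < 2 ^ k := by positivity
    rw [div_pow, one_pow, le_div_iff₀ h2k] at hbern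
    linarith
  rw [zpow_sub₀ two_ne_zero, zpow_sub₀ two_ne_zero, zpow_natCast, zpow_natCast, zpow_one,
    div_le_iff₀ (by positivity)]
  calc (2 : ℝ) ^ k - 1 ≤ k * 2 ^ k / 2 := hk
    _ = _ := by field_simp

theorem stmt_2_general (m n k : ℕ) :
    (1 - (m : ℝ) * (k : ℝ) * (2 : ℝ) ^ ((k : ℤ) - (n : ℤ) - 1)) * 2 ^ (m * n * k) ≤
      ((Nat.card {A : Matrix (Fin n) (Fin k) (ZMod 2) //
          Function.Injective A.mulVec} : ℝ)) ^ m := by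
  have hN := one_sub_div_mul_le_card_injective_mulVec (F := ZMod 2) (m := Fin n) (n := Fin k)
  simp only [ZMod.card, Fintype.card_fin, Nat.cast_ofNat] at hN
  have hN' : (1 - k * (2 : ℝ) ^ ((k : ℤ) - n - 1)) * 2 ^ (n * k) ≤
      Nat.card {A : Matrix (Fin n) (Fin k) (ZMod 2) // Injective A.mulVec} :=
    le_trans (by gcongr; exact two_pow_sub_one_div_two_pow_le n k) hN
  calc (1 - (m : ℝ) * k * 2 ^ ((k : ℤ) - n - 1)) * 2 ^ (m * n * k)
      = (1 - m * (k * (2 : ℝ) ^ ((k : ℤ) - n - 1))) * (2 ^ (n * k)) ^ m := by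
        rw [← pow_mul, mul_assoc (m : ℝ), mul_comm (n * k), mul_assoc]
    _ ≤ _ := one_sub_mul_mul_pow_le_pow (by positivity) (by positivity) hN' m

/-- `m` independent uniformly random `n × k` matrices over `𝔽₂` all have full
column rank with probability at least `1 - m·k·2^{k-n-1}`: writing `N` for the
number of full-column-rank matrices, `N^m ≥ (1 - m·k·2^{k-n-1})·2^{mnk}` as
real numbers. -/
theorem stmt_2 (m n k : ℕ) (hk : k ≤ n) :
    (1 - (m : ℝ) * (k : ℝ) * (2 : ℝ) ^ ((k : ℤ) - (n : ℤ) - 1)) * 2 ^ (m * n * k) ≤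
      ((Nat.card {A : Matrix (Fin n) (Fin k) (ZMod 2) //
          Function.Injective A.mulVec} : ℝ)) ^ m :=
  stmt_2_general m n k
end

section
/- Fix n ∈ ℕ and work in M := Matrix (Fin n → Fin 2) (Fin n → Fin 2) ℂ, with the tensor product T(O) a b = ∏_{i} (O i)(a i)(b i) for O : Fin n → Matrix (Fin 2) (Fin 2) ℂ, and the permutation operator Q(π) a b = (if a = b ∘ π⁻¹ then 1 else 0) for a permutation π of Fin n. Let C : Fin n → Matrix (Fin 2) (Fin 2) ℂ with each C i invertible, let π be a permutation of Fin n, and let O : Fin n → Matrix (Fin 2) (Fin 2) ℂ. Then (T(C) * Q(π)) * T(O) * (T(C) * Q(π))⁻¹ = T(O') where O' i = (C i) * O (π⁻¹ i) * (C i)⁻¹; moreover the weight is preserved: the number of indices i for which O' i is a scalar multiple of the 2×2 identity equals the number of indices i for which O i is a scalar multiple of the 2×2 identity. -/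
/-- The `n`-fold tensor (Kronecker) product of single-qubit operators,
realized concretely on the index type `Fin n → Fin 2`. -/
def tensorOp (n : ℕ) (O : Fin n → Matrix (Fin 2) (Fin 2) ℂ) :
    Matrix (Fin n → Fin 2) (Fin n → Fin 2) ℂ :=
  fun a b => ∏ i, O i (a i) (b i)

/-- The operator permuting the `n` tensor factors according to `π`. -/
def permOp (n : ℕ) (π : Equiv.Perm (Fin n)) :
    Matrix (Fin n → Fin 2) (Fin n → Fin 2) ℂ :=
  fun a b => if a = b ∘ ⇑π⁻¹ then 1 else 0

/-!
`permOp n π` is the permutation matrix of the basis relabelling `a ↦ a ∘ π`, so conjugating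
`tensorOp n O` by it only permutes the tensor factors; `tensorOp` is multiplicative, so
conjugating by `tensorOp n C` acts site by site. Conjugation by an invertible matrix fixes
scalar matrices and is injective, so a site is scalar after the conjugation exactly when the
site it came from was, and the weight count is merely reindexed by `π`.
-/

open Equiv

theorem Finset.card_filter_univ_comp_perm {ι : Type*} [Fintype ι] (σ : Perm ι)
    (p : ι → Prop) [DecidablePred p] :
    (Finset.univ.filter fun i => p (σ i)).card = (Finset.univ.filter p).card :=
  Finset.card_equiv σ (by simp)

namespace Matrix

variable {m R : Type*} [Fintype m] [DecidableEq m] [CommRing R]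

theorem permMatrix_mul_mul_inv (σ : Perm m) (M : Matrix m m R) :
    σ.permMatrix R * M * (σ.permMatrix R)⁻¹ = M.submatrix σ σ := by
  have hinv : (σ.permMatrix R)⁻¹ = σ⁻¹.permMatrix R :=
    inv_eq_left_inv (by rw [← permMatrix_mul, mul_inv_cancel, permMatrix_one])
  rw [hinv, PEquiv.toMatrix_toPEquiv_mul, PEquiv.mul_toMatrix_toPEquiv, submatrix_submatrix]
  rfl

theorem conj_eq_smul_one_iff {A X : Matrix m m R} (hA : IsUnit A) (c : R) :
    A * X * A⁻¹ = c • 1 ↔ X = c • 1 := by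
  have hdet := (isUnit_iff_isUnit_det A).mp hA
  have hscalar : c • (1 : Matrix m m R) = A * (c • 1) * A⁻¹ := by
    rw [Matrix.mul_smul, Matrix.mul_one, Matrix.smul_mul, mul_nonsing_inv A hdet]
  rw [hscalar, (isUnit_nonsing_inv_iff.mpr hA).mul_left_inj, hA.mul_right_inj, ← hscalar]

end Matrix

section Qubits

variable {n : ℕ}

theorem tensorOp_mul (A B : Fin n → Matrix (Fin 2) (Fin 2) ℂ) :
    tensorOp n A * tensorOp n B = tensorOp n (fun i => A i * B i) := by
  ext a b
  simp only [tensorOp, Matrix.mul_apply]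
  rw [Fintype.prod_sum (fun i x => A i (a i) x * B i x (b i))]
  exact Finset.sum_congr rfl fun x _ => Finset.prod_mul_distrib.symm

theorem tensorOp_one : tensorOp n (fun _ => 1) = 1 := by
  ext a b
  simp only [tensorOp, Matrix.one_apply, Finset.prod_boole, Finset.mem_univ, forall_const,
    funext_iff]

theorem tensorOp_inv {C : Fin n → Matrix (Fin 2) (Fin 2) ℂ} (hC : ∀ i, IsUnit (C i)) :
    (tensorOp n C)⁻¹ = tensorOp n (fun i => (C i)⁻¹) := by
  refine Matrix.inv_eq_right_inv ?_
  simp only [tensorOp_mul, Matrix.mul_nonsing_inv _ ((Matrix.isUnit_iff_isUnit_det _).mp (hC _)),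
    tensorOp_one]

theorem tensorOp_submatrix_arrowCongr (e : Perm (Fin n)) (O : Fin n → Matrix (Fin 2) (Fin 2) ℂ) :
    (tensorOp n O).submatrix (e.arrowCongr (.refl _)) (e.arrowCongr (.refl _)) =
      tensorOp n (fun i => O (e i)) := by
  ext a b
  simp only [tensorOp, Matrix.submatrix_apply, arrowCongr_apply, refl_apply, Function.comp]
  rw [← Equiv.prod_comp e]
  simp

theorem permOp_eq_permMatrix (π : Perm (Fin n)) :
    permOp n π = Perm.permMatrix ℂ (π⁻¹.arrowCongr (.refl (Fin 2))) := by
  ext a b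
  simp only [permOp, PEquiv.toMatrix_apply, toPEquiv_apply, Option.mem_def, Option.some.injEq]
  exact if_congr (eq_comp_symm π a b) rfl rfl

theorem permOp_mul_tensorOp_mul_inv (π : Perm (Fin n)) (O : Fin n → Matrix (Fin 2) (Fin 2) ℂ) :
    permOp n π * tensorOp n O * (permOp n π)⁻¹ = tensorOp n (fun i => O (π⁻¹ i)) := by
  rw [permOp_eq_permMatrix, Matrix.permMatrix_mul_mul_inv, tensorOp_submatrix_arrowCongr]

end Qubits

open scoped Classical in
/-- Conjugation by an element `T(C)·Q(π)` of `PLC_n` maps a tensor-product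
error `T(O)` to the tensor-product error `T(O')` with
`O' i = C i · O (π⁻¹ i) · (C i)⁻¹`, and preserves its weight: the number of
sites at which `O'` is a scalar multiple of the identity equals the number of
sites at which `O` is. -/
theorem stmt_16 (n : ℕ) (π : Equiv.Perm (Fin n))
    (C O : Fin n → Matrix (Fin 2) (Fin 2) ℂ) (hC : ∀ i, IsUnit (C i)) :
    (tensorOp n C * permOp n π) * tensorOp n O * (tensorOp n C * permOp n π)⁻¹ =
      tensorOp n (fun i => C i * O (π⁻¹ i) * (C i)⁻¹) ∧
    (Finset.univ.filter fun i : Fin n =>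
        ∃ c : ℂ, C i * O (π⁻¹ i) * (C i)⁻¹ =
          c • (1 : Matrix (Fin 2) (Fin 2) ℂ)).card =
      (Finset.univ.filter fun i : Fin n =>
        ∃ c : ℂ, O i = c • (1 : Matrix (Fin 2) (Fin 2) ℂ)).card := by
  constructor
  · calc (tensorOp n C * permOp n π) * tensorOp n O * (tensorOp n C * permOp n π)⁻¹
        = tensorOp n C * (permOp n π * tensorOp n O * (permOp n π)⁻¹) * (tensorOp n C)⁻¹ := by
          simp only [Matrix.mul_inv_rev, mul_assoc]
      _ = tensorOp n (fun i => C i * O (π⁻¹ i) * (C i)⁻¹) := by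
          rw [permOp_mul_tensorOp_mul_inv, tensorOp_inv hC, tensorOp_mul, tensorOp_mul]
  · simp only [Matrix.conj_eq_smul_one_iff (hC _)]
    exact Finset.card_filter_univ_comp_perm π⁻¹ fun i => ∃ c : ℂ, O i = c • 1
end
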